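/- arXiv:2204.05373 — 3 statements merged into one kernel-verified Lean document; each statement's English description precedes it below -/
import Mathlib

section
/- Let η ∈ 𝒫([d]) be a probability vector satisfying, for some fixed 0 < 𝔞_l ≤ 𝔞_u and a rate matrix α with off-diagonal entries α_{yx} ∈ [𝔞_l,𝔞_u] and rows summing to zero, the stationarity equation ∑_{y∈[d]} η_y α_{yx} = 0 for all x. Then every coordinate of η is bounded below: η_x ≥ A/(1+A) > 0 where A = 𝔞_l/((d−1)𝔞_u). -/
/-- If `η ∈ 𝒫([d])` is stationary for a rate matrix `α` with off-diagonal
entries in `[𝔞_l, 𝔞_u]` and rows summing to zero, then every coordinate of `η`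
is bounded below by `A/(1+A) > 0` with `A = 𝔞_l/((d−1)𝔞_u)`. -/
theorem stationary_distribution_uniform_lower_bound
    (d : ℕ) (hd : 2 ≤ d) (al au : ℝ) (hal : 0 < al) (hau : al ≤ au)
    (η : Fin d → ℝ) (hη0 : ∀ x, 0 ≤ η x) (hη1 : ∑ x : Fin d, η x = 1)
    (α : Fin d → Fin d → ℝ)
    (hoff : ∀ y x, y ≠ x → α y x ∈ Set.Icc al au)
    (hrow : ∀ y, ∑ x : Fin d, α y x = 0)
    (hstat : ∀ x, ∑ y : Fin d, η y * α y x = 0) :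
    (0 : ℝ) < (al / (((d : ℝ) - 1) * au)) / (1 + al / (((d : ℝ) - 1) * au)) ∧
    ∀ x, (al / (((d : ℝ) - 1) * au)) / (1 + al / (((d : ℝ) - 1) * au)) ≤ η x := by
  have hd1 : (1 : ℝ) ≤ (d : ℝ) - 1 := by
    have : (2 : ℝ) ≤ (d : ℝ) := by exact_mod_cast hd
    linarith
  have hau0 : 0 < au := lt_of_lt_of_le hal hau
  set C : ℝ := ((d : ℝ) - 1) * au with hCdef
  have hC : 0 < C := mul_pos (by linarith) hau0
  have hA : al / C / (1 + al / C) = al / (C + al) := by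
    have h1 : (1 + al / C) ≠ 0 := by positivity
    have h2 : C + al ≠ 0 := by positivity
    field_simp
  have hpos : (0 : ℝ) < al / (C + al) := div_pos hal (by linarith)
  rw [hA]
  refine ⟨hpos, fun x => ?_⟩
  have hcard : ((Finset.univ.erase x).card : ℝ) = (d : ℝ) - 1 := by
    rw [Finset.card_erase_of_mem (Finset.mem_univ x)]
    simp [Finset.card_univ]
    have : 1 ≤ d := by omega
    push_cast [Nat.cast_sub this]
    ring
  -- split sums
  have hsplit : η x * α x x + ∑ y ∈ Finset.univ.erase x, η y * α y x = 0 := by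
    rw [Finset.add_sum_erase _ (fun y => η y * α y x) (Finset.mem_univ x)]
    exact hstat x
  have hrowx : α x x + ∑ z ∈ Finset.univ.erase x, α x z = 0 := by
    rw [Finset.add_sum_erase _ (fun z => α x z) (Finset.mem_univ x)]
    exact hrow x
  have hηsum : η x + ∑ y ∈ Finset.univ.erase x, η y = 1 := by
    rw [Finset.add_sum_erase _ (fun y => η y) (Finset.mem_univ x)]
    exact hη1
  -- lower bound on the off-diagonal stationarity sum
  have h1 : al * (1 - η x) ≤ ∑ y ∈ Finset.univ.erase x, η y * α y x := by
    have : ∑ y ∈ Finset.univ.erase x, η y * al ≤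
        ∑ y ∈ Finset.univ.erase x, η y * α y x := by
      apply Finset.sum_le_sum
      intro y hy
      have hyx : y ≠ x := Finset.ne_of_mem_erase hy
      exact mul_le_mul_of_nonneg_left (hoff y x hyx).1 (hη0 y)
    calc al * (1 - η x) = ∑ y ∈ Finset.univ.erase x, η y * al := by
          rw [← Finset.sum_mul]; nlinarith [hηsum]
      _ ≤ _ := this
  -- upper bound on -α x x
  have h2 : -α x x ≤ C := by
    have : ∑ z ∈ Finset.univ.erase x, α x z ≤
        ∑ _z ∈ Finset.univ.erase x, au := by
      apply Finset.sum_le_sum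
      intro z hz
      exact (hoff x z (Finset.ne_of_mem_erase hz).symm).2
    rw [Finset.sum_const, nsmul_eq_mul, hcard] at this
    linarith [hrowx]
  -- combine
  have hkey : al * (1 - η x) ≤ C * η x := by
    have h3 : ∑ y ∈ Finset.univ.erase x, η y * α y x = η x * (-α x x) := by
      linarith [hsplit]
    have h4 : η x * (-α x x) ≤ η x * C := mul_le_mul_of_nonneg_left h2 (hη0 x)
    nlinarith
  rw [div_le_iff₀ (by linarith : (0:ℝ) < C + al)]
  nlinarith
end

section
/- (Duality estimate for the stationary discounted MFG system.) Let (ū^r, μ̄^r) and (v̄^r, θ̄^r) be two solutions of the stationary discounted MFG system: −r ū_x + H(x, Δ_x ū) + F(x, μ̄) = 0 and ∑_y μ̄_y γ*_x(y, Δ_y ū) = 0 (similarly for (v̄, θ̄)). Assume F is Lasry–Lions monotone, H is C² in p with D²_{pp}H ≤ −C_{2,H} < 0 on the relevant compact set, and γ*(x,p) = D_p H(x,p). Then C_{2,H} ∑_x |Δ_x(ū^r − v̄^r)|² (μ̄^r_x + θ̄^r_x) ≤ r (ū^r − v̄^r)·(μ̄^r − θ̄^r). -/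
lemma mfg_kol_zero (d : ℕ) (m w : Fin d → ℝ) (g : Fin d → Fin d → ℝ)
    (hsum : ∀ x, ∑ y : Fin d, g x y = 0)
    (hkol : ∀ y, ∑ x : Fin d, m x * g x y = 0) :
    ∑ x : Fin d, m x * ∑ y : Fin d, (w y - w x) * g x y = 0 := by
  have h1 : ∀ x, ∑ y : Fin d, (w y - w x) * g x y = ∑ y : Fin d, w y * g x y := by
    intro x
    simp [sub_mul, Finset.sum_sub_distrib, ← Finset.mul_sum, hsum x]
  calc ∑ x : Fin d, m x * ∑ y : Fin d, (w y - w x) * g x y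
      = ∑ x : Fin d, ∑ y : Fin d, w y * (m x * g x y) := by
        refine Finset.sum_congr rfl fun x _ => ?_
        rw [h1 x, Finset.mul_sum]
        exact Finset.sum_congr rfl fun y _ => by ring
    _ = ∑ y : Fin d, w y * ∑ x : Fin d, m x * g x y := by
        rw [Finset.sum_comm]
        exact Finset.sum_congr rfl fun y _ => by rw [Finset.mul_sum]
    _ = 0 := by simp [hkol]

/-- Duality estimate for the stationary discounted MFG system: if
`(ū^r, μ̄^r)` and `(v̄^r, θ̄^r)` solve `−r ū_x + H(x,Δ_x ū) + F(x,μ̄) = 0`,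
`∑_y μ̄_y γ*_x(y,Δ_y ū) = 0`, `F` is Lasry–Lions monotone, and `H` is uniformly
concave with `γ* = D_p H` (expressed via the strong concavity inequality), then
`C_{2,H} ∑_x |Δ_x(ū−v̄)|²(μ̄_x + θ̄_x) ≤ r (ū−v̄)·(μ̄−θ̄)`. -/
theorem stationary_discounted_mfg_duality
    (d : ℕ) (hd : 2 ≤ d) (r C2H : ℝ) (hr : 0 < r) (hC : 0 < C2H)
    (Ham F : Fin d → (Fin d → ℝ) → ℝ)
    (γ : Fin d → (Fin d → ℝ) → Fin d → ℝ)
    (hγsum : ∀ (y : Fin d) (p : Fin d → ℝ), ∑ x : Fin d, γ y p x = 0)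
    (hmono : ∀ η η' : Fin d → ℝ,
      (∀ x, 0 ≤ η x) → (∑ x : Fin d, η x = 1) →
      (∀ x, 0 ≤ η' x) → (∑ x : Fin d, η' x = 1) →
      0 ≤ ∑ x : Fin d, (F x η - F x η') * (η x - η' x))
    (hconc : ∀ (x : Fin d) (p q : Fin d → ℝ),
      Ham x q - Ham x p + ∑ y : Fin d, (p y - q y) * γ x p y
        ≤ -C2H * ∑ y : Fin d, (p y - q y) ^ 2)
    (ubar vbar mubar thetabar : Fin d → ℝ)
    (hmu : (∀ x, 0 ≤ mubar x) ∧ ∑ x : Fin d, mubar x = 1)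
    (htheta : (∀ x, 0 ≤ thetabar x) ∧ ∑ x : Fin d, thetabar x = 1)
    (hval1 : ∀ x, -(r * ubar x) + Ham x (fun y => ubar y - ubar x) + F x mubar = 0)
    (hkol1 : ∀ x, ∑ y : Fin d, mubar y * γ y (fun z => ubar z - ubar y) x = 0)
    (hval2 : ∀ x, -(r * vbar x) + Ham x (fun y => vbar y - vbar x) + F x thetabar = 0)
    (hkol2 : ∀ x, ∑ y : Fin d, thetabar y * γ y (fun z => vbar z - vbar y) x = 0) :
    C2H * ∑ x : Fin d,
        (∑ y : Fin d, ((ubar y - ubar x) - (vbar y - vbar x)) ^ 2) *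
          (mubar x + thetabar x)
      ≤ r * ∑ x : Fin d, (ubar x - vbar x) * (mubar x - thetabar x) := by
  set w : Fin d → ℝ := fun x => ubar x - vbar x with hw
  -- squared difference term
  set D : Fin d → ℝ := fun x => ∑ y : Fin d, ((ubar y - ubar x) - (vbar y - vbar x)) ^ 2 with hD
  -- the two Kolmogorov "zero" identities tested against w
  have hS1 : ∑ x : Fin d, mubar x *
      ∑ y : Fin d, (w y - w x) * γ x (fun z => ubar z - ubar x) y = 0 := by
    exact mfg_kol_zero d mubar w (fun x y => γ x (fun z => ubar z - ubar x) y)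
      (fun x => hγsum x _) hkol1
  have hS2 : ∑ x : Fin d, thetabar x *
      ∑ y : Fin d, (w y - w x) * γ x (fun z => vbar z - vbar x) y = 0 := by
    exact mfg_kol_zero d thetabar w (fun x y => γ x (fun z => vbar z - vbar x) y)
      (fun x => hγsum x _) hkol2
  -- difference of value equations
  have hA : ∀ x, Ham x (fun y => ubar y - ubar x) - Ham x (fun y => vbar y - vbar x)
      = r * w x - (F x mubar - F x thetabar) := by
    intro x
    have h1 := hval1 x
    have h2 := hval2 x
    simp only [hw]
    linarith
  -- pointwise concavity estimate, μ side
  have key1 : ∀ x, C2H * D x + ∑ y : Fin d, (w y - w x) * γ x (fun z => ubar z - ubar x) y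
      ≤ Ham x (fun y => ubar y - ubar x) - Ham x (fun y => vbar y - vbar x) := by
    intro x
    have h := hconc x (fun y => ubar y - ubar x) (fun y => vbar y - vbar x)
    have e1 : ∑ y : Fin d, ((ubar y - ubar x) - (vbar y - vbar x)) *
        γ x (fun z => ubar z - ubar x) y
        = ∑ y : Fin d, (w y - w x) * γ x (fun z => ubar z - ubar x) y := by
      refine Finset.sum_congr rfl fun y _ => ?_
      simp only [hw]; ring
    simp only [hD]
    rw [← e1]
    linarith [h]
  -- pointwise concavity estimate, θ side
  have key2 : ∀ x, C2H * D x - ∑ y : Fin d, (w y - w x) * γ x (fun z => vbar z - vbar x) y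
      ≤ Ham x (fun y => vbar y - vbar x) - Ham x (fun y => ubar y - ubar x) := by
    intro x
    have h := hconc x (fun y => vbar y - vbar x) (fun y => ubar y - ubar x)
    have e1 : ∑ y : Fin d, ((vbar y - vbar x) - (ubar y - ubar x)) *
        γ x (fun z => vbar z - vbar x) y
        = -∑ y : Fin d, (w y - w x) * γ x (fun z => vbar z - vbar x) y := by
      rw [← Finset.sum_neg_distrib]
      refine Finset.sum_congr rfl fun y _ => ?_
      simp only [hw]; ring
    have e2 : ∑ y : Fin d, ((vbar y - vbar x) - (ubar y - ubar x)) ^ 2 = D x := by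
      simp only [hD]
      exact Finset.sum_congr rfl fun y _ => by ring
    rw [e1, e2] at h
    linarith
  -- sum over x with weights μ and θ
  have sum1 : C2H * ∑ x : Fin d, mubar x * D x
      ≤ ∑ x : Fin d, mubar x *
        (Ham x (fun y => ubar y - ubar x) - Ham x (fun y => vbar y - vbar x)) := by
    have hle : ∑ x : Fin d, mubar x *
        (C2H * D x + ∑ y : Fin d, (w y - w x) * γ x (fun z => ubar z - ubar x) y)
        ≤ ∑ x : Fin d, mubar x *
          (Ham x (fun y => ubar y - ubar x) - Ham x (fun y => vbar y - vbar x)) :=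
      Finset.sum_le_sum fun x _ => mul_le_mul_of_nonneg_left (key1 x) (hmu.1 x)
    have heq : ∑ x : Fin d, mubar x *
        (C2H * D x + ∑ y : Fin d, (w y - w x) * γ x (fun z => ubar z - ubar x) y)
        = C2H * ∑ x : Fin d, mubar x * D x
          + ∑ x : Fin d, mubar x *
            ∑ y : Fin d, (w y - w x) * γ x (fun z => ubar z - ubar x) y := by
      rw [Finset.mul_sum, ← Finset.sum_add_distrib]
      exact Finset.sum_congr rfl fun x _ => by ring
    rw [heq, hS1, add_zero] at hle
    exact hle
  have sum2 : C2H * ∑ x : Fin d, thetabar x * D x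
      ≤ ∑ x : Fin d, thetabar x *
        (Ham x (fun y => vbar y - vbar x) - Ham x (fun y => ubar y - ubar x)) := by
    have hle : ∑ x : Fin d, thetabar x *
        (C2H * D x - ∑ y : Fin d, (w y - w x) * γ x (fun z => vbar z - vbar x) y)
        ≤ ∑ x : Fin d, thetabar x *
          (Ham x (fun y => vbar y - vbar x) - Ham x (fun y => ubar y - ubar x)) :=
      Finset.sum_le_sum fun x _ => mul_le_mul_of_nonneg_left (key2 x) (htheta.1 x)
    have heq : ∑ x : Fin d, thetabar x *
        (C2H * D x - ∑ y : Fin d, (w y - w x) * γ x (fun z => vbar z - vbar x) y)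
        = C2H * ∑ x : Fin d, thetabar x * D x
          - ∑ x : Fin d, thetabar x *
            ∑ y : Fin d, (w y - w x) * γ x (fun z => vbar z - vbar x) y := by
      rw [Finset.mul_sum, ← Finset.sum_sub_distrib]
      exact Finset.sum_congr rfl fun x _ => by ring
    rw [heq, hS2, sub_zero] at hle
    exact hle
  -- combine with value equation and monotonicity
  have hmon := hmono mubar thetabar hmu.1 hmu.2 htheta.1 htheta.2
  have sumA : ∑ x : Fin d, (mubar x - thetabar x) *
      (Ham x (fun y => ubar y - ubar x) - Ham x (fun y => vbar y - vbar x))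
      = r * ∑ x : Fin d, w x * (mubar x - thetabar x)
        - ∑ x : Fin d, (F x mubar - F x thetabar) * (mubar x - thetabar x) := by
    rw [Finset.mul_sum, ← Finset.sum_sub_distrib]
    refine Finset.sum_congr rfl fun x _ => ?_
    rw [hA x]; ring
  have split : ∑ x : Fin d, (mubar x - thetabar x) *
      (Ham x (fun y => ubar y - ubar x) - Ham x (fun y => vbar y - vbar x))
      = ∑ x : Fin d, mubar x *
          (Ham x (fun y => ubar y - ubar x) - Ham x (fun y => vbar y - vbar x))
        + ∑ x : Fin d, thetabar x *
          (Ham x (fun y => vbar y - vbar x) - Ham x (fun y => ubar y - ubar x)) := by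
    rw [← Finset.sum_add_distrib]
    exact Finset.sum_congr rfl fun x _ => by ring
  have final : C2H * ∑ x : Fin d, mubar x * D x + C2H * ∑ x : Fin d, thetabar x * D x
      ≤ r * ∑ x : Fin d, w x * (mubar x - thetabar x) := by
    have := sumA
    linarith [sum1, sum2, split.symm ▸ sumA]
  have lhseq : C2H * ∑ x : Fin d, D x * (mubar x + thetabar x)
      = C2H * ∑ x : Fin d, mubar x * D x + C2H * ∑ x : Fin d, thetabar x * D x := by
    rw [← mul_add, ← Finset.sum_add_distrib]
    congr 1
    exact Finset.sum_congr rfl fun x _ => by ring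
  have rhseq : ∑ x : Fin d, w x * (mubar x - thetabar x)
      = ∑ x : Fin d, (ubar x - vbar x) * (mubar x - thetabar x) := rfl
  calc C2H * ∑ x : Fin d, D x * (mubar x + thetabar x)
      = C2H * ∑ x : Fin d, mubar x * D x + C2H * ∑ x : Fin d, thetabar x * D x := lhseq
    _ ≤ r * ∑ x : Fin d, w x * (mubar x - thetabar x) := final
    _ = r * ∑ x : Fin d, (ubar x - vbar x) * (mubar x - thetabar x) := by rw [rhseq]
end

section
/- (Contraction giving existence of a solution to the stationary discounted value equation.) Fix μ ∈ 𝒫([d]) and define S^μ : [0, C/r]^d → [0, C/r]^d by S^μ(u)(x) := inf over rate vectors a (with a_y ∈ [𝔞_l, 𝔞_u] for y ≠ x) of (∑_{y≠x} a_y + r)^{−1}(∑_{y≠x} a_y u_y + f(x,a) + F(x,μ)). Then S^μ is a contraction in the sup-norm with constant (d−1)𝔞_u / ((d−1)𝔞_u + r) < 1, hence has a unique fixed point u^μ, and this fixed point satisfies r u^μ_x = H(x, Δ_x u^μ) + F(x,μ) for every x, where H(x,p) = inf_a { f(x,a) + a·p }. -/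
/-!
The map `S` is an infimum of affine maps `u ↦ (s + r)⁻¹ (∑_{y ≠ x} a_y u_y + f + F)` whose
linear part has sup-norm `s / (s + r)`, where `s = ∑_{y ≠ x} a_y ≤ (d - 1) 𝔞_u`; an infimum of
uniformly Lipschitz maps is Lipschitz with the same constant, so Banach's fixed point theorem
applies. At a fixed point `u`, multiplying `S(u)(x) - u_x` by the positive, bounded factor
`s + r` turns the infimum defining `S(u)(x) = u_x` into the one defining
`H(x, Δ_x u) + F(x, μ) - r u_x`, which therefore vanishes.
-/

/-- The set of admissible rate vectors at state `x`: off-diagonal entries in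
`[al, au]` and the `x`-entry equal to minus the sum of the others. -/
def admissibleRates (d : ℕ) (al au : ℝ) (x : Fin d) : Set (Fin d → ℝ) :=
  {a : Fin d → ℝ | (∀ y, y ≠ x → a y ∈ Set.Icc al au) ∧
    a x = -∑ y ∈ Finset.univ \ {x}, a y}

open Finset

section Order

variable {α β : Type*} [AddCommGroup β] [LinearOrder β] [IsOrderedAddMonoid β] {A : Set α}

theorem le_add_of_isGLB_of_forall_le_add {g h : α → β} {s t c : β}
    (hs : s ∈ lowerBounds (g '' A)) (ht : IsGLB (h '' A) t) (hgh : ∀ a ∈ A, g a ≤ h a + c) :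
    s ≤ t + c :=
  sub_le_iff_le_add.1 <| ht.2 <| by
    rintro _ ⟨a, ha, rfl⟩
    exact sub_le_iff_le_add.2 ((hs ⟨a, ha, rfl⟩).trans (hgh a ha))

theorem isGLB_image_of_sub_le_mul_sub {g φ : α → ℝ} {t k M : ℝ} (hg : IsGLB (g '' A) t)
    (hM : 0 < M) (hk : ∀ a ∈ A, k ≤ φ a) (hφ : ∀ a ∈ A, φ a - k ≤ M * (g a - t)) :
    IsGLB (φ '' A) k := by
  refine ⟨by rintro _ ⟨a, ha, rfl⟩; exact hk a ha, fun b hb => ?_⟩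
  by_contra! hkb
  obtain ⟨_, ⟨a, ha, rfl⟩, -, hga⟩ := hg.exists_between_self_add (div_pos (sub_pos.2 hkb) hM)
  have hφa : φ a - k < b - k := by
    calc φ a - k ≤ M * (g a - t) := hφ a ha
      _ < M * ((b - k) / M) := by gcongr; linarith
      _ = b - k := mul_div_cancel₀ _ hM.ne'
  exact (hb ⟨a, ha, rfl⟩).not_gt (by linarith)

end Order

theorem existsUnique_fixedPoint_of_norm_sub_le {E : Type*} [NormedAddCommGroup E] [CompleteSpace E]
    {T : E → E} {K : ℝ} (hK : K < 1) (hT : ∀ u v, ‖T u - T v‖ ≤ K * ‖u - v‖) :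
    ∃! u, T u = u := by
  have hT' : ContractingWith K.toNNReal T := by
    refine ⟨Real.toNNReal_lt_one.2 hK, LipschitzWith.of_dist_le_mul fun u v => ?_⟩
    rw [dist_eq_norm, dist_eq_norm]
    exact (hT u v).trans (by gcongr; exact Real.le_coe_toNNReal K)
  exact ⟨hT'.fixedPoint T, hT'.fixedPoint_isFixedPt, fun v hv => hT'.fixedPoint_unique hv⟩

theorem abs_sum_mul_le_sum_mul_norm {ι : Type*} [Fintype ι] (s : Finset ι) {w : ι → ℝ}
    (hw : ∀ i ∈ s, 0 ≤ w i) (v : ι → ℝ) : |∑ i ∈ s, w i * v i| ≤ (∑ i ∈ s, w i) * ‖v‖ := by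
  rw [sum_mul]
  refine (abs_sum_le_sum_abs _ _).trans (sum_le_sum fun i hi => ?_)
  rw [abs_mul, abs_of_nonneg (hw i hi)]
  exact mul_le_mul_of_nonneg_left ((Real.norm_eq_abs _).symm.trans_le (norm_le_pi_norm v i))
    (hw i hi)

theorem div_add_le_div_add {t M r : ℝ} (ht : 0 ≤ t) (htM : t ≤ M) (hr : 0 < r) :
    t / (t + r) ≤ M / (M + r) := by
  rw [div_le_div_iff₀ (by linarith) (by linarith)]
  nlinarith

section AdmissibleRates

variable {d : ℕ} {al au : ℝ} {x : Fin d} {a : Fin d → ℝ}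

theorem nonneg_of_mem_admissibleRates (hal : 0 ≤ al) (ha : a ∈ admissibleRates d al au x) :
    ∀ y ∈ univ \ {x}, 0 ≤ a y :=
  fun y hy => hal.trans (ha.1 y (by simpa using hy)).1

theorem sum_le_of_mem_admissibleRates (ha : a ∈ admissibleRates d al au x) :
    ∑ y ∈ univ \ {x}, a y ≤ ((d : ℝ) - 1) * au := by
  have hcard : ((#(univ \ {x}) : ℕ) : ℝ) = (d : ℝ) - 1 := by
    rw [card_univ_sdiff, Fintype.card_fin, card_singleton, Nat.cast_sub x.pos, Nat.cast_one]
  calc ∑ y ∈ univ \ {x}, a y ≤ #(univ \ {x}) • au :=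
        sum_le_card_nsmul _ _ _ fun y hy => (ha.1 y (by simpa using hy)).2
    _ = ((d : ℝ) - 1) * au := by rw [nsmul_eq_mul, hcard]

theorem admissibleRates_nonempty (hau : al ≤ au) : (admissibleRates d al au x).Nonempty := by
  refine ⟨Function.update (fun _ => al) x (-∑ _ ∈ univ \ {x}, al),
    fun y hy => by simpa [Function.update_of_ne hy] using hau, ?_⟩
  rw [Function.update_self]
  congr 1
  exact sum_congr rfl fun y hy => (Function.update_of_ne (by simpa using hy) _ (fun _ => al)).symm

end AdmissibleRates

noncomputable def discountedCost {d : ℕ} (r : ℝ) (f : Fin d → (Fin d → ℝ) → ℝ) (F : Fin d → ℝ)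
    (u : Fin d → ℝ) (x : Fin d) (a : Fin d → ℝ) : ℝ :=
  (∑ y ∈ univ \ {x}, a y + r)⁻¹ * (∑ y ∈ univ \ {x}, a y * u y + f x a + F x)

noncomputable def valueMap (d : ℕ) (al au r : ℝ) (f : Fin d → (Fin d → ℝ) → ℝ) (F : Fin d → ℝ)
    (u : Fin d → ℝ) (x : Fin d) : ℝ :=
  sInf (discountedCost r f F u x '' admissibleRates d al au x)

section DiscountedCost

variable {d : ℕ} {r : ℝ} {f : Fin d → (Fin d → ℝ) → ℝ} {F : Fin d → ℝ} {x : Fin d}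
  {a : Fin d → ℝ}

theorem discountedCost_le_add (hr : 0 < r) (ha : ∀ y ∈ univ \ {x}, 0 ≤ a y) {M : ℝ}
    (hM : ∑ y ∈ univ \ {x}, a y ≤ M) (u v : Fin d → ℝ) :
    discountedCost r f F u x a ≤ discountedCost r f F v x a + M / (M + r) * ‖u - v‖ := by
  set s := ∑ y ∈ univ \ {x}, a y
  have hs : 0 ≤ s := sum_nonneg ha
  have hsub : discountedCost r f F u x a - discountedCost r f F v x a =
      (s + r)⁻¹ * ∑ y ∈ univ \ {x}, a y * (u - v) y := by
    simp only [discountedCost, Pi.sub_apply, mul_sub, sum_sub_distrib]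
    ring
  have hbound := abs_sum_mul_le_sum_mul_norm _ ha (u - v)
  rw [← sub_le_iff_le_add']
  calc discountedCost r f F u x a - discountedCost r f F v x a
      ≤ (s + r)⁻¹ * (s * ‖u - v‖) := by
        rw [hsub]
        exact mul_le_mul_of_nonneg_left ((le_abs_self _).trans hbound) (by positivity)
    _ = s / (s + r) * ‖u - v‖ := by ring
    _ ≤ M / (M + r) * ‖u - v‖ :=
        mul_le_mul_of_nonneg_right (div_add_le_div_add hs hM hr) (norm_nonneg _)

theorem neg_norm_le_discountedCost (hr : 0 < r) (ha : ∀ y ∈ univ \ {x}, 0 ≤ a y)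
    (hfF : 0 ≤ f x a + F x) (u : Fin d → ℝ) : -‖u‖ ≤ discountedCost r f F u x a := by
  set s := ∑ y ∈ univ \ {x}, a y
  have hs : 0 ≤ s := sum_nonneg ha
  have hu := neg_le_of_abs_le (abs_sum_mul_le_sum_mul_norm _ ha u)
  rw [discountedCost, neg_le, ← mul_neg, inv_mul_le_iff₀ (by positivity)]
  nlinarith [norm_nonneg u]

theorem discountedCost_mem_Icc (hr : 0 < r) (ha : ∀ y ∈ univ \ {x}, 0 ≤ a y) {C : ℝ}
    (hfF : f x a + F x ∈ Set.Icc 0 C) {u : Fin d → ℝ} (hu : ∀ y, u y ∈ Set.Icc 0 (C / r)) :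
    discountedCost r f F u x a ∈ Set.Icc 0 (C / r) := by
  have hs : 0 ≤ ∑ y ∈ univ \ {x}, a y := sum_nonneg ha
  have hsum_nonneg : 0 ≤ ∑ y ∈ univ \ {x}, a y * u y :=
    sum_nonneg fun y hy => mul_nonneg (ha y hy) (hu y).1
  have hsum_le : ∑ y ∈ univ \ {x}, a y * u y ≤ (∑ y ∈ univ \ {x}, a y) * (C / r) := by
    rw [sum_mul]
    exact sum_le_sum fun y hy => mul_le_mul_of_nonneg_left (hu y).2 (ha y hy)
  refine ⟨mul_nonneg (by positivity) (by linarith [hfF.1]), ?_⟩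
  rw [discountedCost, inv_mul_le_iff₀ (by positivity), add_mul, mul_div_cancel₀ _ hr.ne']
  linarith [hfF.2]

theorem add_sum_mul_sub_sub_eq_mul_discountedCost_sub (hs : ∑ y ∈ univ \ {x}, a y + r ≠ 0)
    (u : Fin d → ℝ) :
    f x a + ∑ y, a y * (u y - u x) - (r * u x - F x) =
      (∑ y ∈ univ \ {x}, a y + r) * (discountedCost r f F u x a - u x) := by
  have hsplit : ∑ y, a y * (u y - u x) = ∑ y ∈ univ \ {x}, a y * (u y - u x) := by
    rw [← sum_sdiff (subset_univ {x}), sum_singleton, sub_self, mul_zero, add_zero]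
  rw [discountedCost, mul_sub, ← mul_assoc, mul_inv_cancel₀ hs, one_mul, hsplit]
  simp only [mul_sub, sum_sub_distrib, ← sum_mul]
  ring

end DiscountedCost

section ValueMap

variable {d : ℕ} {al au r : ℝ} {f : Fin d → (Fin d → ℝ) → ℝ} {F : Fin d → ℝ}

theorem isGLB_valueMap (hal : 0 ≤ al) (hau : al ≤ au) (hr : 0 < r)
    (hfF : ∀ x a, a ∈ admissibleRates d al au x → 0 ≤ f x a + F x) (u : Fin d → ℝ) (x : Fin d) :
    IsGLB (discountedCost r f F u x '' admissibleRates d al au x) (valueMap d al au r f F u x) :=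
  isGLB_csInf ((admissibleRates_nonempty hau).image _) ⟨-‖u‖, by
    rintro _ ⟨a, ha, rfl⟩
    exact neg_norm_le_discountedCost hr (nonneg_of_mem_admissibleRates hal ha) (hfF x a ha) u⟩

theorem norm_valueMap_sub_le (hd : 1 ≤ d) (hal : 0 ≤ al) (hau : al ≤ au) (hr : 0 < r)
    (hfF : ∀ x a, a ∈ admissibleRates d al au x → 0 ≤ f x a + F x) (u v : Fin d → ℝ) :
    ‖valueMap d al au r f F u - valueMap d al au r f F v‖ ≤
      ((d : ℝ) - 1) * au / (((d : ℝ) - 1) * au + r) * ‖u - v‖ := by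
  have hd' : (0 : ℝ) ≤ (d : ℝ) - 1 := sub_nonneg.2 (Nat.one_le_cast.2 hd)
  have hau' : 0 ≤ au := hal.trans hau
  have hle : ∀ u v x, valueMap d al au r f F u x ≤ valueMap d al au r f F v x +
      ((d : ℝ) - 1) * au / (((d : ℝ) - 1) * au + r) * ‖u - v‖ := fun u v x =>
    le_add_of_isGLB_of_forall_le_add (isGLB_valueMap hal hau hr hfF u x).1
      (isGLB_valueMap hal hau hr hfF v x) fun a ha =>
        discountedCost_le_add hr (nonneg_of_mem_admissibleRates hal ha)
          (sum_le_of_mem_admissibleRates ha) u v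
  refine (pi_norm_le_iff_of_nonneg (by positivity)).2 fun x => ?_
  rw [Pi.sub_apply, Real.norm_eq_abs, abs_sub_le_iff]
  exact ⟨sub_le_iff_le_add'.2 (hle u v x), sub_le_iff_le_add'.2 (norm_sub_rev u v ▸ hle v u x)⟩

theorem valueMap_mem_Icc (hal : 0 ≤ al) (hau : al ≤ au) (hr : 0 < r) {C : ℝ}
    (hfF : ∀ x a, a ∈ admissibleRates d al au x → f x a + F x ∈ Set.Icc 0 C) {u : Fin d → ℝ}
    (hu : ∀ y, u y ∈ Set.Icc 0 (C / r)) (x : Fin d) :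
    valueMap d al au r f F u x ∈ Set.Icc 0 (C / r) := by
  have hglb := isGLB_valueMap hal hau hr (fun x a ha => (hfF x a ha).1) u x
  have hcost : ∀ a ∈ admissibleRates d al au x, discountedCost r f F u x a ∈ Set.Icc 0 (C / r) :=
    fun a ha => discountedCost_mem_Icc hr (nonneg_of_mem_admissibleRates hal ha) (hfF x a ha) hu
  obtain ⟨a₀, ha₀⟩ := admissibleRates_nonempty (x := x) hau
  exact ⟨hglb.2 (by rintro _ ⟨a, ha, rfl⟩; exact (hcost a ha).1),
    (hglb.1 ⟨a₀, ha₀, rfl⟩).trans (hcost a₀ ha₀).2⟩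

theorem mul_eq_sInf_add_of_valueMap_eq (hal : 0 ≤ al) (hau : al ≤ au) (hr : 0 < r)
    (hfF : ∀ x a, a ∈ admissibleRates d al au x → 0 ≤ f x a + F x) {u : Fin d → ℝ}
    (hu : valueMap d al au r f F u = u) (x : Fin d) :
    r * u x = sInf ((fun a => f x a + ∑ y, a y * (u y - u x)) '' admissibleRates d al au x) +
      F x := by
  have hglb := isGLB_valueMap hal hau hr hfF u x
  rw [hu] at hglb
  have hM : 0 < ((d : ℝ) - 1) * au + r :=
    add_pos_of_nonneg_of_pos (mul_nonneg (sub_nonneg.2 (Nat.one_le_cast.2 x.pos)) (hal.trans hau)) hr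
  have hgap a (ha : a ∈ admissibleRates d al au x) : 0 ≤ discountedCost r f F u x a - u x :=
    sub_nonneg.2 (hglb.1 ⟨a, ha, rfl⟩)
  have hrate a (ha : a ∈ admissibleRates d al au x) : 0 < ∑ y ∈ univ \ {x}, a y + r :=
    add_pos_of_nonneg_of_pos (sum_nonneg (nonneg_of_mem_admissibleRates hal ha)) hr
  have hHJB : IsGLB ((fun a => f x a + ∑ y, a y * (u y - u x)) '' admissibleRates d al au x)
      (r * u x - F x) := by
    refine isGLB_image_of_sub_le_mul_sub hglb hM (fun a ha => ?_) (fun a ha => ?_)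
    · rw [← sub_nonneg, add_sum_mul_sub_sub_eq_mul_discountedCost_sub (hrate a ha).ne']
      exact mul_nonneg (hrate a ha).le (hgap a ha)
    · rw [add_sum_mul_sub_sub_eq_mul_discountedCost_sub (hrate a ha).ne']
      exact mul_le_mul_of_nonneg_right
        (add_le_add_left (sum_le_of_mem_admissibleRates ha) r) (hgap a ha)
  rw [hHJB.csInf_eq ((admissibleRates_nonempty hau).image _)]
  ring

end ValueMap

theorem stationary_value_map_contraction_general
    (d : ℕ) (hd : 2 ≤ d) (al au r Cb : ℝ)
    (hal : 0 < al) (hau : al ≤ au) (hr : 0 < r)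
    (f F : Fin d → (Fin d → ℝ) → ℝ)
    (μ : Fin d → ℝ)
    (hbd : ∀ (x : Fin d) (a : Fin d → ℝ), a ∈ admissibleRates d al au x →
      0 ≤ f x a + F x μ ∧ f x a + F x μ ≤ Cb)
    (Ham : Fin d → (Fin d → ℝ) → ℝ)
    (hHam : ∀ x p, Ham x p =
      sInf ((fun a => f x a + ∑ y : Fin d, a y * p y) '' admissibleRates d al au x))
    (S : (Fin d → ℝ) → Fin d → ℝ)
    (hS : ∀ (u : Fin d → ℝ) (x : Fin d), S u x =
      sInf ((fun a => (∑ y ∈ Finset.univ \ {x}, a y + r)⁻¹ *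
          (∑ y ∈ Finset.univ \ {x}, a y * u y + f x a + F x μ)) ''
        admissibleRates d al au x)) :
    (∀ u v : Fin d → ℝ,
        ‖S u - S v‖ ≤ (((d : ℝ) - 1) * au / (((d : ℝ) - 1) * au + r)) * ‖u - v‖) ∧
    (((d : ℝ) - 1) * au / (((d : ℝ) - 1) * au + r) < 1) ∧
    (∀ u : Fin d → ℝ, (∀ x, u x ∈ Set.Icc 0 (Cb / r)) →
        ∀ x, S u x ∈ Set.Icc 0 (Cb / r)) ∧
    (∃! u : Fin d → ℝ, S u = u) ∧
    (∀ u : Fin d → ℝ, S u = u →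
        ∀ x, r * u x = Ham x (fun y => u y - u x) + F x μ) := by
  obtain rfl : S = valueMap d al au r f (fun x => F x μ) := funext fun u => funext (hS u)
  have hfF x a ha : 0 ≤ f x a + F x μ := (hbd x a ha).1
  have hcontr := norm_valueMap_sub_le (by omega) hal.le hau hr hfF
  have hK : ((d : ℝ) - 1) * au / (((d : ℝ) - 1) * au + r) < 1 := by
    have : (1 : ℝ) ≤ d - 1 := by linarith [show (2 : ℝ) ≤ d by exact_mod_cast hd]
    rw [div_lt_one (by nlinarith)]
    linarith
  refine ⟨hcontr, hK, fun u hu x => valueMap_mem_Icc hal.le hau hr hbd hu x,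
    existsUnique_fixedPoint_of_norm_sub_le hK hcontr, fun u hu x => ?_⟩
  rw [hHam]
  exact mul_eq_sInf_add_of_valueMap_eq hal.le hau hr hfF hu x

/-- The contraction map `S^μ` of the stationary discounted value equation:
it is a sup-norm contraction with constant `(d−1)𝔞_u/((d−1)𝔞_u + r) < 1`, maps
`[0, C/r]^d` into itself, has a unique fixed point, and any fixed point `u`
satisfies `r u_x = H(x, Δ_x u) + F(x, μ)` where `H(x,p) = inf_a {f(x,a)+a·p}`. -/
theorem stationary_value_map_contraction
    (d : ℕ) (hd : 2 ≤ d) (al au r Cb : ℝ)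
    (hal : 0 < al) (hau : al ≤ au) (hr : 0 < r)
    (f F : Fin d → (Fin d → ℝ) → ℝ)
    (hf : ∀ x, Continuous (f x))
    (μ : Fin d → ℝ) (hμ : (∀ x, 0 ≤ μ x) ∧ ∑ x : Fin d, μ x = 1)
    (hbd : ∀ (x : Fin d) (a : Fin d → ℝ), a ∈ admissibleRates d al au x →
      0 ≤ f x a + F x μ ∧ f x a + F x μ ≤ Cb)
    (Ham : Fin d → (Fin d → ℝ) → ℝ)
    (hHam : ∀ x p, Ham x p =
      sInf ((fun a => f x a + ∑ y : Fin d, a y * p y) '' admissibleRates d al au x))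
    (S : (Fin d → ℝ) → Fin d → ℝ)
    (hS : ∀ (u : Fin d → ℝ) (x : Fin d), S u x =
      sInf ((fun a => (∑ y ∈ Finset.univ \ {x}, a y + r)⁻¹ *
          (∑ y ∈ Finset.univ \ {x}, a y * u y + f x a + F x μ)) ''
        admissibleRates d al au x)) :
    (∀ u v : Fin d → ℝ,
        ‖S u - S v‖ ≤ (((d : ℝ) - 1) * au / (((d : ℝ) - 1) * au + r)) * ‖u - v‖) ∧
    (((d : ℝ) - 1) * au / (((d : ℝ) - 1) * au + r) < 1) ∧
    (∀ u : Fin d → ℝ, (∀ x, u x ∈ Set.Icc 0 (Cb / r)) →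
        ∀ x, S u x ∈ Set.Icc 0 (Cb / r)) ∧
    (∃! u : Fin d → ℝ, S u = u) ∧
    (∀ u : Fin d → ℝ, S u = u →
        ∀ x, r * u x = Ham x (fun y => u y - u x) + F x μ) :=
  stationary_value_map_contraction_general d hd al au r Cb hal hau hr f F μ hbd Ham hHam S hS
end
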